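/- arXiv:1001.5465 — 3 statements merged into one kernel-verified Lean document; each statement's English description precedes it below -/
import Mathlib

section
/- Let G be a finite group, μ : G → G → ℂ a factor system (|μ(f,g)| = 1 for all f,g; μ(e,f) = μ(f,e) = 1; and μ(h,f)μ(hf,g) = μ(h,fg)μ(f,g) for all f,g,h). Let A, A', B be nonempty finite index types, let U : G → Matrix A A ℂ and U' : G → Matrix A' A' ℂ be two projective unitary representations of G, both with the same factor system μ, and assume the family (U f)_{f∈G} is linearly independent. Let W : G → Matrix B B ℂ. If 𝒰 := Σ_{f∈G} (U f) ⊗ (W f) is unitary, then 𝒰' := Σ_{f∈G} (U' f) ⊗ (W f) is also unitary. -/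
open Matrix Kronecker

/-!
Since `U (h * g) * (U g)ᴴ = conj (μ h g) • U h`, expanding `𝒰 * 𝒰ᴴ` gives `∑ h, U h ⊗ M h`
with `M h = ∑ g, conj (μ h g) • W (h * g) * (W g)ᴴ` (`twistedCorrelation μ W`), and `M` depends
only on `μ` and `W`. Linear independence of the `U h` turns `𝒰 * 𝒰ᴴ = 1 = U 1 ⊗ 1` into
`M = Pi.single 1 1`, and then the same expansion for `U'` gives `𝒰' * 𝒰'ᴴ = U' 1 ⊗ 1 = 1`.
-/

section Kronecker

variable {ι R l m n p : Type*} [Fintype ι] [CommSemiring R]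

theorem Matrix.kronecker_sum (X : Matrix l m R) (Y : ι → Matrix n p R) :
    X ⊗ₖ (∑ i, Y i) = ∑ i, X ⊗ₖ Y i :=
  map_sum (kroneckerBilinear (R := R) X) Y Finset.univ

theorem Matrix.sum_kronecker_pi_single [DecidableEq ι] (U : ι → Matrix l m R) (i : ι)
    (Y : Matrix n p R) : ∑ j, U j ⊗ₖ (Pi.single i Y : ι → Matrix n p R) j = U i ⊗ₖ Y := by
  rw [Fintype.sum_eq_single i fun j hj => by rw [Pi.single_eq_of_ne hj, kronecker_zero],
    Pi.single_eq_same]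

theorem LinearIndependent.sum_kronecker_injective {U : ι → Matrix l m R}
    (hU : LinearIndependent R U) {X Y : ι → Matrix n p R}
    (h : ∑ i, U i ⊗ₖ X i = ∑ i, U i ⊗ₖ Y i) : X = Y := by
  ext i b b'
  have hcoeff : ∑ j, X j b b' • U j = ∑ j, Y j b b' • U j := by
    ext a a'
    simpa [Matrix.sum_apply, mul_comm] using congrFun (congrFun h (a, b)) (a', b')
  exact Fintype.linearIndependent_iffₛ.mp hU (fun j => X j b b') (fun j => Y j b b') hcoeff i

end Kronecker

section ProjectiveRepresentation

variable {𝕜 G A B : Type*} [RCLike 𝕜] [Group G] [Fintype A] [DecidableEq A]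
  [Fintype B] {μ : G → G → 𝕜} {V : G → Matrix A A 𝕜}

theorem mul_star_eq_star_smul (hμ : ∀ f g, ‖μ f g‖ = 1)
    (hVu : ∀ f, V f ∈ unitaryGroup A 𝕜) (hVm : ∀ f g, V f * V g = μ f g • V (f * g)) (h g : G) :
    V (h * g) * star (V g) = star (μ h g) • V h := by
  have hμμ : star (μ h g) * μ h g = 1 := by
    rw [RCLike.star_def, RCLike.conj_mul, hμ, RCLike.ofReal_one, one_pow]
  calc V (h * g) * star (V g) = star (μ h g) • ((μ h g • V (h * g)) * star (V g)) := by
        rw [smul_mul_assoc, smul_smul, hμμ, one_smul]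
    _ = star (μ h g) • V h := by
        rw [← hVm, mul_assoc, mem_unitaryGroup_iff.mp (hVu g), mul_one]

variable (μ) in
def twistedCorrelation [Fintype G] (W : G → Matrix B B 𝕜) (h : G) : Matrix B B 𝕜 :=
  ∑ g, star (μ h g) • (W (h * g) * star (W g))

theorem sum_kronecker_mul_star_sum_kronecker [Fintype G] (hμ : ∀ f g, ‖μ f g‖ = 1)
    (hVu : ∀ f, V f ∈ unitaryGroup A 𝕜) (hVm : ∀ f g, V f * V g = μ f g • V (f * g))
    (W : G → Matrix B B 𝕜) :
    (∑ f, V f ⊗ₖ W f) * star (∑ f, V f ⊗ₖ W f) =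
      ∑ h, V h ⊗ₖ twistedCorrelation μ W h := by
  calc (∑ f, V f ⊗ₖ W f) * star (∑ f, V f ⊗ₖ W f)
      = ∑ f, ∑ g, (V f * star (V g)) ⊗ₖ (W f * star (W g)) := by
        simp only [star_sum, Finset.sum_mul_sum, star_eq_conjTranspose, conjTranspose_kronecker,
          mul_kronecker_mul]
    _ = ∑ g, ∑ h, (V (h * g) * star (V g)) ⊗ₖ (W (h * g) * star (W g)) := by
        rw [Finset.sum_comm]
        exact Finset.sum_congr rfl fun g _ => (Equiv.sum_comp (Equiv.mulRight g) _).symm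
    _ = ∑ h, V h ⊗ₖ twistedCorrelation μ W h := by
        simp only [mul_star_eq_star_smul hμ hVu hVm, smul_kronecker, ← kronecker_smul,
          twistedCorrelation, kronecker_sum]
        exact Finset.sum_comm

end ProjectiveRepresentation

theorem stmt_8_general {G : Type*} [Group G] [Fintype G] [DecidableEq G]
    (μ : G → G → ℂ)
    (hμabs : ∀ f g : G, ‖μ f g‖ = 1)
    {A A' B : Type*} [Fintype A] [DecidableEq A]
    [Fintype A'] [DecidableEq A']
    [Fintype B] [DecidableEq B]
    (U : G → Matrix A A ℂ) (U' : G → Matrix A' A' ℂ)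
    (hUu : ∀ f : G, U f ∈ Matrix.unitaryGroup A ℂ)
    (hUe : U 1 = 1)
    (hUm : ∀ f g : G, U f * U g = μ f g • U (f * g))
    (hU'u : ∀ f : G, U' f ∈ Matrix.unitaryGroup A' ℂ)
    (hU'e : U' 1 = 1)
    (hU'm : ∀ f g : G, U' f * U' g = μ f g • U' (f * g))
    (hUli : LinearIndependent ℂ U)
    (W : G → Matrix B B ℂ)
    (h𝒰 : (∑ f : G, (U f) ⊗ₖ (W f)) ∈ Matrix.unitaryGroup (A × B) ℂ) :
    (∑ f : G, (U' f) ⊗ₖ (W f)) ∈ Matrix.unitaryGroup (A' × B) ℂ := by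
  rw [mem_unitaryGroup_iff, sum_kronecker_mul_star_sum_kronecker hμabs hUu hUm] at h𝒰
  have hcorr : twistedCorrelation μ W = Pi.single 1 1 :=
    hUli.sum_kronecker_injective (by rw [h𝒰, sum_kronecker_pi_single, hUe, one_kronecker_one])
  rw [mem_unitaryGroup_iff, sum_kronecker_mul_star_sum_kronecker hμabs hU'u hU'm, hcorr,
    sum_kronecker_pi_single, hU'e, one_kronecker_one]

theorem stmt_8 {G : Type*} [Group G] [Fintype G] [DecidableEq G]
    (μ : G → G → ℂ)
    (hμabs : ∀ f g : G, ‖μ f g‖ = 1)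
    (hμel : ∀ f : G, μ 1 f = 1) (hμer : ∀ f : G, μ f 1 = 1)
    (hμc : ∀ f g h : G, μ h f * μ (h * f) g = μ h (f * g) * μ f g)
    {A A' B : Type*} [Fintype A] [DecidableEq A] [Nonempty A]
    [Fintype A'] [DecidableEq A'] [Nonempty A']
    [Fintype B] [DecidableEq B] [Nonempty B]
    (U : G → Matrix A A ℂ) (U' : G → Matrix A' A' ℂ)
    (hUu : ∀ f : G, U f ∈ Matrix.unitaryGroup A ℂ)
    (hUe : U 1 = 1)
    (hUm : ∀ f g : G, U f * U g = μ f g • U (f * g))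
    (hU'u : ∀ f : G, U' f ∈ Matrix.unitaryGroup A' ℂ)
    (hU'e : U' 1 = 1)
    (hU'm : ∀ f g : G, U' f * U' g = μ f g • U' (f * g))
    (hUli : LinearIndependent ℂ U)
    (W : G → Matrix B B ℂ)
    (h𝒰 : (∑ f : G, (U f) ⊗ₖ (W f)) ∈ Matrix.unitaryGroup (A × B) ℂ) :
    (∑ f : G, (U' f) ⊗ₖ (W f)) ∈ Matrix.unitaryGroup (A' × B) ℂ :=
  stmt_8_general μ hμabs U U' hUu hUe hUm hU'u hU'e hU'm hUli W h𝒰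
end

section
/- Let G be a finite group with N = |G|, μ : G → G → ℂ a factor system (|μ(f,g)| = 1 for all f,g; μ(e,f) = μ(f,e) = 1; and μ(h,f)μ(hf,g) = μ(h,fg)μ(f,g) for all f,g,h), and let (D λ)_{λ∈ι} be a family of pairwise-inequivalent irreducible projective unitary representations of G with factor system μ, D λ : G → Matrix (Fin (d λ)) (Fin (d λ)) ℂ, satisfying Σ_{λ∈ι} (d λ)² = N. Let B be a nonempty finite index type, W : G → Matrix B B ℂ arbitrary, and for each λ define Q λ := Σ_{f∈G} (D λ f) ⊗ (W f), a matrix indexed by Fin (d λ) × B. Then for every f ∈ G and all p, q ∈ B: (W f)(p,q) = Σ_{λ∈ι} (d λ / N) · Σ_{j,k ∈ Fin (d λ)} conj((D λ f)(j,k)) · (Q λ)((j,p),(k,q)). -/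
/-!
Schur's lemma, applied to the group averages `∑ g, D g * X * (D' g)ᴴ` (which intertwine `D` and
`D'` because both have the same factor system), gives the orthogonality relations for matrix
coefficients: the coefficient matrix `M`, with rows indexed by `(λ, j, k)` and columns by `G`,
satisfies `M * Mᴴ = diagonal (N / d λ)`. The completeness relation `∑ λ, (d λ)² = N` makes `M`
square, so `Mᴴ * diagonal (d λ / N)` is also a left inverse of `M`; read entrywise against `W`,
this is the inversion formula.
-/

open Matrix Kronecker

namespace Matrix

section Schur

variable {α n n' : Type*} [Fintype n] [DecidableEq n] [Fintype n']

def IsIrreducibleFamily (D : α → Matrix n n ℂ) : Prop :=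
  ∀ S : Submodule ℂ (n → ℂ), (∀ f, ∀ v ∈ S, (D f).mulVec v ∈ S) → S = ⊥ ∨ S = ⊤

def AreEquivalentFamilies [DecidableEq n'] (D : α → Matrix n n ℂ) (D' : α → Matrix n' n' ℂ) :
    Prop :=
  ∃ (S : Matrix n' n ℂ) (T : Matrix n n' ℂ), S * T = 1 ∧ T * S = 1 ∧ ∀ f, S * D f = D' f * S

variable {D : α → Matrix n n ℂ} {D' : α → Matrix n' n' ℂ} {T : Matrix n' n ℂ}

lemma mulVec_mem_ker_toLin'_of_intertwines (hT : ∀ f, T * D f = D' f * T) (f : α)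
    {v : n → ℂ} (hv : v ∈ LinearMap.ker T.toLin') : (D f).mulVec v ∈ LinearMap.ker T.toLin' := by
  simp only [LinearMap.mem_ker, toLin'_apply, mulVec_mulVec, hT f] at hv ⊢
  rw [← mulVec_mulVec, hv, mulVec_zero]

lemma mulVec_mem_range_toLin'_of_intertwines (hT : ∀ f, T * D f = D' f * T) (f : α)
    {v : n' → ℂ} (hv : v ∈ LinearMap.range T.toLin') :
    (D' f).mulVec v ∈ LinearMap.range T.toLin' := by
  obtain ⟨w, rfl⟩ := hv
  exact ⟨(D f).mulVec w, by simp only [toLin'_apply, mulVec_mulVec, hT f]⟩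

theorem eq_zero_of_intertwines [DecidableEq n'] (hD : IsIrreducibleFamily D)
    (hD' : IsIrreducibleFamily D') (hDD' : ¬ AreEquivalentFamilies D D')
    (hT : ∀ f, T * D f = D' f * T) : T = 0 := by
  by_contra hT0
  replace hT0 : T.toLin' ≠ 0 := by rwa [Ne, ← map_zero toLin', toLin'.injective.eq_iff]
  have hker := (hD _ (mulVec_mem_ker_toLin'_of_intertwines hT)).resolve_right
    (hT0 ∘ LinearMap.ker_eq_top.mp)
  have hrange := (hD' _ (mulVec_mem_range_toLin'_of_intertwines hT)).resolve_left
    (hT0 ∘ LinearMap.range_eq_bot.mp)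
  let e := LinearEquiv.ofBijective T.toLin'
    ⟨LinearMap.ker_eq_bot.mp hker, LinearMap.range_eq_top.mp hrange⟩
  refine hDD' ⟨T, LinearMap.toMatrix' e.symm.toLinearMap, ?_, ?_, hT⟩ <;>
    apply toLin'.injective <;>
    rw [toLin'_mul, toLin'_toMatrix', toLin'_one]
  exacts [LinearMap.ext e.apply_symm_apply, LinearMap.ext e.symm_apply_apply]

theorem exists_eq_smul_one_of_commute {T : Matrix n n ℂ} (hD : IsIrreducibleFamily D)
    (hT : ∀ f, D f * T = T * D f) : ∃ c : ℂ, T = c • 1 := by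
  cases isEmpty_or_nonempty n
  · exact ⟨0, Subsingleton.elim _ _⟩
  obtain ⟨c, hc⟩ := Module.End.exists_eigenvalue T.toLin'
  refine ⟨c, sub_eq_zero.mp (toLin'.injective ?_)⟩
  have hTc : ∀ f, (T - c • 1) * D f = D f * (T - c • 1) := fun f => by
    simp [sub_mul, mul_sub, hT f]
  have hker := (hD _ (mulVec_mem_ker_toLin'_of_intertwines hTc)).resolve_left (by
    rw [Module.End.hasEigenvalue_iff, Module.End.eigenspace_def] at hc
    simpa [map_sub, Module.End.one_eq_id] using hc)
  simpa using LinearMap.ker_eq_top.mp hker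

end Schur

lemma conjTranspose_mul_mul_eq_smul {G n : Type*} [Group G] [Fintype n] [DecidableEq n]
    {μ : G → G → ℂ} {D : G → Matrix n n ℂ} (hDu : ∀ f, D f ∈ unitaryGroup n ℂ)
    (hDm : ∀ f g, D f * D g = μ f g • D (f * g)) (f g : G) :
    (D (f * g))ᴴ * D f = μ f g • (D g)ᴴ := by
  have hf : D f = μ f g • (D (f * g) * (D g)ᴴ) := by
    rw [← smul_mul, ← hDm, Matrix.mul_assoc, ← star_eq_conjTranspose,
      mem_unitaryGroup_iff.mp (hDu g), Matrix.mul_one]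
  rw [hf, Matrix.mul_smul, ← Matrix.mul_assoc, ← star_eq_conjTranspose,
    mem_unitaryGroup_iff'.mp (hDu _), Matrix.one_mul]

section GroupAverage

variable {G n n' : Type*} [Fintype G] [Fintype n] [Fintype n']

def groupAverage (D : G → Matrix n n ℂ) (D' : G → Matrix n' n' ℂ) (X : Matrix n n' ℂ) :
    Matrix n n' ℂ :=
  ∑ g, D g * X * (D' g)ᴴ

variable {D : G → Matrix n n ℂ} {D' : G → Matrix n' n' ℂ}

lemma groupAverage_single_apply [DecidableEq n] [DecidableEq n'] (a : n) (b : n') (j : n)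
    (j' : n') : groupAverage D D' (single a b 1) j j' = ∑ g, D g j a * star (D' g j' b) := by
  simp [groupAverage, Matrix.sum_apply, Matrix.mul_apply, single_apply, ite_and]

lemma trace_groupAverage [DecidableEq n] (hDu : ∀ f, D f ∈ unitaryGroup n ℂ)
    (X : Matrix n n ℂ) : (groupAverage D D X).trace = Fintype.card G * X.trace := by
  simp only [groupAverage, trace_sum, trace_mul_cycle _ X, ← star_eq_conjTranspose,
    mem_unitaryGroup_iff'.mp (hDu _), Matrix.one_mul, Finset.sum_const, Finset.card_univ,
    nsmul_eq_mul]

lemma groupAverage_intertwines [Group G] [DecidableEq n'] {μ : G → G → ℂ}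
    (hDm : ∀ f g, D f * D g = μ f g • D (f * g)) (hDu' : ∀ f, D' f ∈ unitaryGroup n' ℂ)
    (hDm' : ∀ f g, D' f * D' g = μ f g • D' (f * g)) (X : Matrix n n' ℂ) (f : G) :
    D f * groupAverage D D' X = groupAverage D D' X * D' f := by
  rw [groupAverage, Matrix.mul_sum, Matrix.sum_mul,
    ← Equiv.sum_comp (Equiv.mulLeft f) (fun g => D g * X * (D' g)ᴴ * D' f)]
  refine Finset.sum_congr rfl fun g _ => ?_
  simp only [Equiv.coe_mulLeft, Matrix.mul_assoc, conjTranspose_mul_mul_eq_smul hDu' hDm' f g]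
  rw [← Matrix.mul_assoc, hDm, Matrix.smul_mul, Matrix.mul_smul, Matrix.mul_smul]

end GroupAverage

section Orthogonality

variable {G n n' : Type*} [Group G] [Fintype G] [Fintype n] [DecidableEq n] [Fintype n']
  [DecidableEq n'] {μ : G → G → ℂ} {D : G → Matrix n n ℂ} {D' : G → Matrix n' n' ℂ}

theorem sum_mul_star_eq_ite (hDu : ∀ f, D f ∈ unitaryGroup n ℂ)
    (hDm : ∀ f g, D f * D g = μ f g • D (f * g)) (hD : IsIrreducibleFamily D) (a b j j' : n) :
    ∑ g, D g j a * star (D g j' b) =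
      if j = j' ∧ a = b then (Fintype.card G : ℂ) / Fintype.card n else 0 := by
  obtain ⟨c, hc⟩ := exists_eq_smul_one_of_commute hD
    (groupAverage_intertwines hDm hDu hDm (single a b 1))
  have : Nonempty n := ⟨a⟩
  have hn : (Fintype.card n : ℂ) ≠ 0 := Nat.cast_ne_zero.mpr Fintype.card_ne_zero
  have htrace : c * Fintype.card n = Fintype.card G * (single a b 1 : Matrix n n ℂ).trace := by
    simpa [hc, mul_comm] using trace_groupAverage hDu (single a b 1)
  rw [← groupAverage_single_apply, hc]
  by_cases hab : a = b
  · subst hab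
    rw [trace_single_eq_same, mul_one, ← eq_div_iff hn] at htrace
    by_cases hjj : j = j' <;> simp [htrace, hjj]
  · rw [trace_single_eq_of_ne _ _ _ hab, mul_zero, mul_eq_zero, or_iff_left hn] at htrace
    simp [htrace, hab]

theorem sum_mul_star_eq_zero (hDu' : ∀ f, D' f ∈ unitaryGroup n' ℂ)
    (hDm : ∀ f g, D f * D g = μ f g • D (f * g)) (hDm' : ∀ f g, D' f * D' g = μ f g • D' (f * g))
    (hD : IsIrreducibleFamily D) (hD' : IsIrreducibleFamily D')
    (hD'D : ¬ AreEquivalentFamilies D' D) (a : n) (b : n') (j : n) (j' : n') :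
    ∑ g, D g j a * star (D' g j' b) = 0 := by
  rw [← groupAverage_single_apply, eq_zero_of_intertwines hD' hD hD'D
    fun f => (groupAverage_intertwines hDm hDu' hDm' (single a b 1) f).symm, zero_apply]

end Orthogonality

section Completeness

variable {G ι : Type*} [Group G] [Fintype G] {n : ι → Type*} [∀ i, Fintype (n i)]
  [∀ i, DecidableEq (n i)] {μ : G → G → ℂ} {D : ∀ i, G → Matrix (n i) (n i) ℂ}

def coeffMatrix (D : ∀ i, G → Matrix (n i) (n i) ℂ) : Matrix (Σ i, n i × n i) G ℂ :=
  of fun x g => D x.1 g x.2.1 x.2.2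

theorem coeffMatrix_mul_conjTranspose [DecidableEq ι] (hDu : ∀ i f, D i f ∈ unitaryGroup (n i) ℂ)
    (hDm : ∀ i f g, D i f * D i g = μ f g • D i (f * g))
    (hirr : ∀ i, IsIrreducibleFamily (D i))
    (hineq : ∀ i i', i ≠ i' → ¬ AreEquivalentFamilies (D i) (D i')) :
    coeffMatrix D * (coeffMatrix D)ᴴ =
      diagonal fun x => (Fintype.card G : ℂ) / Fintype.card (n x.1) := by
  ext ⟨i, j, a⟩ ⟨i', j', b⟩
  simp only [mul_apply, coeffMatrix, conjTranspose_apply, of_apply]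
  by_cases hii : i = i'
  · subst hii
    rw [sum_mul_star_eq_ite (hDu i) (hDm i) (hirr i)]
    by_cases hja : j = j' ∧ a = b
    · obtain ⟨rfl, rfl⟩ := hja
      simp
    · rw [if_neg hja, diagonal_apply_ne]
      simpa using hja
  · rw [sum_mul_star_eq_zero (hDu i') (hDm i) (hDm i') (hirr i) (hirr i')
      (hineq i' i (Ne.symm hii)), diagonal_apply_ne]
    exact fun h => hii (congrArg Sigma.fst h)

theorem conjTranspose_coeffMatrix_mul [Fintype ι] [DecidableEq ι] [DecidableEq G]
    (hDu : ∀ i f, D i f ∈ unitaryGroup (n i) ℂ)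
    (hDm : ∀ i f g, D i f * D i g = μ f g • D i (f * g))
    (hirr : ∀ i, IsIrreducibleFamily (D i))
    (hineq : ∀ i i', i ≠ i' → ¬ AreEquivalentFamilies (D i) (D i'))
    (hcard : Fintype.card (Σ i, n i × n i) = Fintype.card G) :
    (coeffMatrix D)ᴴ *
      (diagonal (fun x : Σ i, n i × n i => (Fintype.card (n x.1) : ℂ) / Fintype.card G) *
        coeffMatrix D) = 1 := by
  rw [← mul_eq_one_comm_of_equiv (Fintype.equivOfCardEq hcard), Matrix.mul_assoc,
    coeffMatrix_mul_conjTranspose hDu hDm hirr hineq, diagonal_mul_diagonal, ← diagonal_one]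
  congr 1
  funext x
  have : Nonempty (n x.1) := ⟨x.2.1⟩
  have : (Fintype.card (n x.1) : ℂ) ≠ 0 := Nat.cast_ne_zero.mpr Fintype.card_ne_zero
  have : (Fintype.card G : ℂ) ≠ 0 := Nat.cast_ne_zero.mpr Fintype.card_ne_zero
  field_simp

theorem fourier_inversion [Fintype ι] (hDu : ∀ i f, D i f ∈ unitaryGroup (n i) ℂ)
    (hDm : ∀ i f g, D i f * D i g = μ f g • D i (f * g))
    (hirr : ∀ i, IsIrreducibleFamily (D i))
    (hineq : ∀ i i', i ≠ i' → ¬ AreEquivalentFamilies (D i) (D i'))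
    (hcard : Fintype.card (Σ i, n i × n i) = Fintype.card G) (φ : G → ℂ) (f : G) :
    ∑ i, (Fintype.card (n i) : ℂ) / Fintype.card G *
      ∑ j, ∑ k, star (D i f j k) * ∑ g, D i g j k * φ g = φ f := by
  classical
  have h := congrFun (congrArg (· *ᵥ φ)
    (conjTranspose_coeffMatrix_mul hDu hDm hirr hineq hcard)) f
  rw [← mulVec_mulVec, ← mulVec_mulVec, one_mulVec] at h
  rw [← h]
  simp only [mulVec, dotProduct, diagonal_apply, ite_mul, zero_mul, Finset.sum_ite_eq,
    Finset.mem_univ, if_true]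
  simp only [Fintype.sum_sigma, Fintype.sum_prod_type, coeffMatrix, conjTranspose_apply,
    of_apply, Finset.mul_sum]
  refine Finset.sum_congr rfl fun i _ => Finset.sum_congr rfl fun j _ =>
    Finset.sum_congr rfl fun k _ => Finset.sum_congr rfl fun g _ => by ring

end Completeness

end Matrix

theorem stmt_12_general {G : Type*} [Group G] [Fintype G]
    (μ : G → G → ℂ)
    {ι : Type*} [Fintype ι]
    (d : ι → ℕ)
    (D : (lam : ι) → G → Matrix (Fin (d lam)) (Fin (d lam)) ℂ)
    (hDu : ∀ (lam : ι) (f : G), D lam f ∈ Matrix.unitaryGroup (Fin (d lam)) ℂ)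
    (hDm : ∀ (lam : ι) (f g : G), D lam f * D lam g = μ f g • D lam (f * g))
    (hirr : ∀ (lam : ι) (S : Submodule ℂ (Fin (d lam) → ℂ)),
      (∀ (f : G), ∀ v ∈ S, (D lam f).mulVec v ∈ S) → S = ⊥ ∨ S = ⊤)
    (hineq : ∀ lam lam' : ι, lam ≠ lam' →
      ¬ ∃ (S : Matrix (Fin (d lam')) (Fin (d lam)) ℂ)
          (T : Matrix (Fin (d lam)) (Fin (d lam')) ℂ),
        S * T = 1 ∧ T * S = 1 ∧ ∀ f : G, S * D lam f = D lam' f * S)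
    (hcomplete : ∑ lam : ι, (d lam) ^ 2 = Fintype.card G)
    {B : Type*}
    (W : G → Matrix B B ℂ)
    (Q : (lam : ι) → Matrix (Fin (d lam) × B) (Fin (d lam) × B) ℂ)
    (hQ : ∀ lam : ι, Q lam = ∑ f : G, (D lam f) ⊗ₖ (W f)) :
    ∀ (f : G) (p q : B),
      W f p q = ∑ lam : ι, ((d lam : ℂ) / (Fintype.card G : ℂ))
        * ∑ j : Fin (d lam), ∑ k : Fin (d lam),
            star (D lam f j k) * Q lam (j, p) (k, q) := by
  intro f p q
  have hcard : Fintype.card (Σ lam, Fin (d lam) × Fin (d lam)) = Fintype.card G := by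
    simp [Fintype.card_sigma, ← hcomplete, sq]
  have hQ_apply (lam : ι) (j k : Fin (d lam)) :
      Q lam (j, p) (k, q) = ∑ g, D lam g j k * W g p q := by
    simp [hQ, Matrix.sum_apply]
  simp only [hQ_apply]
  simpa using (fourier_inversion hDu hDm hirr hineq hcard (fun g => W g p q) f).symm

theorem stmt_12 {G : Type*} [Group G] [Fintype G] [DecidableEq G]
    (μ : G → G → ℂ)
    (hμabs : ∀ f g : G, ‖μ f g‖ = 1)
    (hμel : ∀ f : G, μ 1 f = 1) (hμer : ∀ f : G, μ f 1 = 1)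
    (hμc : ∀ f g h : G, μ h f * μ (h * f) g = μ h (f * g) * μ f g)
    {ι : Type*} [Fintype ι] [DecidableEq ι]
    (d : ι → ℕ) (hd : ∀ lam : ι, 1 ≤ d lam)
    (D : (lam : ι) → G → Matrix (Fin (d lam)) (Fin (d lam)) ℂ)
    (hDu : ∀ (lam : ι) (f : G), D lam f ∈ Matrix.unitaryGroup (Fin (d lam)) ℂ)
    (hDe : ∀ lam : ι, D lam 1 = 1)
    (hDm : ∀ (lam : ι) (f g : G), D lam f * D lam g = μ f g • D lam (f * g))
    (hirr : ∀ (lam : ι) (S : Submodule ℂ (Fin (d lam) → ℂ)),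
      (∀ (f : G), ∀ v ∈ S, (D lam f).mulVec v ∈ S) → S = ⊥ ∨ S = ⊤)
    (hineq : ∀ lam lam' : ι, lam ≠ lam' →
      ¬ ∃ (S : Matrix (Fin (d lam')) (Fin (d lam)) ℂ)
          (T : Matrix (Fin (d lam)) (Fin (d lam')) ℂ),
        S * T = 1 ∧ T * S = 1 ∧ ∀ f : G, S * D lam f = D lam' f * S)
    (hcomplete : ∑ lam : ι, (d lam) ^ 2 = Fintype.card G)
    {B : Type*} [Fintype B] [DecidableEq B] [Nonempty B]
    (W : G → Matrix B B ℂ)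
    (Q : (lam : ι) → Matrix (Fin (d lam) × B) (Fin (d lam) × B) ℂ)
    (hQ : ∀ lam : ι, Q lam = ∑ f : G, (D lam f) ⊗ₖ (W f)) :
    ∀ (f : G) (p q : B),
      W f p q = ∑ lam : ι, ((d lam : ℂ) / (Fintype.card G : ℂ))
        * ∑ j : Fin (d lam), ∑ k : Fin (d lam),
            star (D lam f j k) * Q lam (j, p) (k, q) :=
  stmt_12_general μ d D hDu hDm hirr hineq hcomplete W Q hQ
end

section
/- Let G be a finite group, and let μ, ν : G → G → ℂ be factor systems (each with all values of modulus 1, value 1 whenever one argument is e, and satisfying the cocycle identity). Let A, B be nonempty finite index types, U : G → Matrix A A ℂ a projective unitary representation of G with factor system μ, and V : G → Matrix B B ℂ a projective unitary representation of G with factor system ν. Suppose c : G → ℂ satisfies, for every g ∈ G, Σ_{f∈G} conj(μ(f,g)·ν(f,g)) · conj(c(f)) · c(fg) = (if g = e then 1 else 0). Then 𝒰 := Σ_{f∈G} c(f) • ((U f) ⊗ (V f)) is a unitary matrix on ℂ^(A×B). -/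
/-!
Writing `Γ f = U f ⊗ V f` and `γ = μ ν`, the Kronecker product `Γ` is again a projective
unitary representation, with factor system `γ`. For a projective unitary representation one
has `Γ(f)ᴴ Γ(f g) = conj γ(f,g) • Γ(g)`, so after substituting `h = f g` the product `𝒰ᴴ 𝒰`
collapses to `∑_g (∑_f conj γ(f,g) conj c(f) c(f g)) • Γ(g) = Γ(1) = 1`.
-/

open Matrix Kronecker

lemma Complex.star_mul_self_of_norm_eq_one {z : ℂ} (hz : ‖z‖ = 1) : star z * z = 1 := by
  rw [Complex.star_def, Complex.conj_mul', hz]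
  norm_num

section ProjectiveUnitary

variable {R : Type*} [Ring R] [StarRing R] [Algebra ℂ R]

lemma Unitary.star_mul_eq_star_smul_of_mul_eq_smul {u v w : R} {z : ℂ} (hu : u ∈ unitary R)
    (hz : ‖z‖ = 1) (h : u * v = z • w) : star u * w = star z • v := by
  have hv : star u * (u * v) = v := by
    rw [← mul_assoc, Unitary.star_mul_self_of_mem hu, one_mul]
  rw [h, mul_smul_comm] at hv
  rw [← hv, smul_smul, Complex.star_mul_self_of_norm_eq_one hz, one_smul]

variable [StarModule ℂ R] {G : Type*} [Group G] [Fintype G] [DecidableEq G]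
  {γ : G → G → ℂ} {Γ : G → R}

lemma star_sum_smul_mul_sum_smul_eq_one (hγ : ∀ f g, ‖γ f g‖ = 1)
    (hΓu : ∀ f, Γ f ∈ unitary R) (hΓe : Γ 1 = 1) (hΓm : ∀ f g, Γ f * Γ g = γ f g • Γ (f * g))
    (c : G → ℂ)
    (hc : ∀ g, ∑ f, star (γ f g) * star (c f) * c (f * g) = if g = 1 then 1 else 0) :
    star (∑ f, c f • Γ f) * ∑ f, c f • Γ f = 1 := by
  have hterm : ∀ f g, star (c f • Γ f) * (c (f * g) • Γ (f * g))
      = (star (γ f g) * star (c f) * c (f * g)) • Γ g := by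
    intro f g
    rw [star_smul, smul_mul_smul_comm, Unitary.star_mul_eq_star_smul_of_mul_eq_smul (hΓu f)
      (hγ f g) (hΓm f g), smul_smul]
    congr 1
    ring
  calc star (∑ f, c f • Γ f) * ∑ f, c f • Γ f
      = ∑ f, ∑ g, star (c f • Γ f) * (c (f * g) • Γ (f * g)) := by
        rw [star_sum, Finset.sum_mul_sum]
        exact Finset.sum_congr rfl fun f _ =>
          (Fintype.sum_equiv (Equiv.mulLeft f) _ _ fun _ => rfl).symm
    _ = ∑ g, (∑ f, star (γ f g) * star (c f) * c (f * g)) • Γ g := by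
        simp only [hterm, Finset.sum_smul]
        exact Finset.sum_comm
    _ = 1 := by
        simp only [hc, ite_smul, one_smul, zero_smul, Finset.sum_ite_eq', Finset.mem_univ,
          if_true, hΓe]

end ProjectiveUnitary

lemma Matrix.kronecker_mul_kronecker_of_projective {G A B : Type*} [Mul G] [Fintype A]
    [Fintype B] {μ ν : G → G → ℂ} {U : G → Matrix A A ℂ} {V : G → Matrix B B ℂ}
    (hUm : ∀ f g, U f * U g = μ f g • U (f * g))
    (hVm : ∀ f g, V f * V g = ν f g • V (f * g))
    (f g : G) : (U f ⊗ₖ V f) * (U g ⊗ₖ V g) = (μ f g * ν f g) • (U (f * g) ⊗ₖ V (f * g)) := by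
  rw [← mul_kronecker_mul, hUm, hVm, smul_kronecker, kronecker_smul, smul_smul]

theorem stmt_16_general {G : Type*} [Group G] [Fintype G] [DecidableEq G]
    (μ ν : G → G → ℂ)
    (hμabs : ∀ f g : G, ‖μ f g‖ = 1)
    (hνabs : ∀ f g : G, ‖ν f g‖ = 1)
    {A B : Type*} [Fintype A] [DecidableEq A]
    [Fintype B] [DecidableEq B]
    (U : G → Matrix A A ℂ)
    (hUu : ∀ f : G, U f ∈ Matrix.unitaryGroup A ℂ)
    (hUe : U 1 = 1)
    (hUm : ∀ f g : G, U f * U g = μ f g • U (f * g))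
    (V : G → Matrix B B ℂ)
    (hVu : ∀ f : G, V f ∈ Matrix.unitaryGroup B ℂ)
    (hVe : V 1 = 1)
    (hVm : ∀ f g : G, V f * V g = ν f g • V (f * g))
    (c : G → ℂ)
    (hc : ∀ g : G, ∑ f : G, star (μ f g * ν f g) * star (c f) * c (f * g)
      = if g = 1 then 1 else 0) :
    (∑ f : G, c f • ((U f) ⊗ₖ (V f))) ∈ Matrix.unitaryGroup (A × B) ℂ := by
  rw [mem_unitaryGroup_iff']
  exact star_sum_smul_mul_sum_smul_eq_one (γ := fun f g => μ f g * ν f g)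
    (fun f g => by rw [norm_mul, hμabs, hνabs, one_mul])
    (fun f => kronecker_mem_unitary (hUu f) (hVu f)) (by rw [hUe, hVe, one_kronecker_one])
    (kronecker_mul_kronecker_of_projective hUm hVm) c hc

theorem stmt_16 {G : Type*} [Group G] [Fintype G] [DecidableEq G]
    (μ ν : G → G → ℂ)
    (hμabs : ∀ f g : G, ‖μ f g‖ = 1)
    (hμel : ∀ f : G, μ 1 f = 1) (hμer : ∀ f : G, μ f 1 = 1)
    (hμc : ∀ f g h : G, μ h f * μ (h * f) g = μ h (f * g) * μ f g)
    (hνabs : ∀ f g : G, ‖ν f g‖ = 1)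
    (hνel : ∀ f : G, ν 1 f = 1) (hνer : ∀ f : G, ν f 1 = 1)
    (hνc : ∀ f g h : G, ν h f * ν (h * f) g = ν h (f * g) * ν f g)
    {A B : Type*} [Fintype A] [DecidableEq A] [Nonempty A]
    [Fintype B] [DecidableEq B] [Nonempty B]
    (U : G → Matrix A A ℂ)
    (hUu : ∀ f : G, U f ∈ Matrix.unitaryGroup A ℂ)
    (hUe : U 1 = 1)
    (hUm : ∀ f g : G, U f * U g = μ f g • U (f * g))
    (V : G → Matrix B B ℂ)
    (hVu : ∀ f : G, V f ∈ Matrix.unitaryGroup B ℂ)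
    (hVe : V 1 = 1)
    (hVm : ∀ f g : G, V f * V g = ν f g • V (f * g))
    (c : G → ℂ)
    (hc : ∀ g : G, ∑ f : G, star (μ f g * ν f g) * star (c f) * c (f * g)
      = if g = 1 then 1 else 0) :
    (∑ f : G, c f • ((U f) ⊗ₖ (V f))) ∈ Matrix.unitaryGroup (A × B) ℂ :=
  stmt_16_general μ ν hμabs hνabs U hUu hUe hUm V hVu hVe hVm c hc
end
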